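/- Let μ₃ be the scale-3 self-similar measure on ℝ³ for B = {(0,0,0),(1/2,0,0),(0,1/2,0),(0,0,1/2)} and R = 3I₃, i.e., μ̂₃(t) = ∏_{n≥0} χ_B(t/3ⁿ) with χ_B(t) = (1/4)(1 + e^{iπt₁} + e^{iπt₂} + e^{iπt₃}). Then the points (0,0,0) and (4,4,0) both lie in P₃(L) = { l₀ + 3l₁ + 9l₂ + ⋯ : lᵢ ∈ L } with L = {(0,0,0),(1,1,0),(1,0,1),(0,1,1)}, but μ̂₃(4,4,0) ≠ 0, so e_{(0,0,0)} and e_{(4,4,0)} are not orthogonal in L²(μ₃). -/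

import Mathlib

/-! The Fourier transform `μ̂` of a measure satisfying the self-similarity identity obeys
`μ̂(t) = χ_B(t) μ̂(t/3)`, hence `μ̂(t) = ∏_{k<n} χ_B(t/3^k) · μ̂(t/3^n)` for every `n`.
As `μ̂` is continuous with `μ̂(0) = 1`, the last factor is nonzero for large `n`; and on the
diagonal `χ_B(a,a,0) = (1 + e^{iπa})/2` vanishes only when `a` is an odd integer, which
`4/3^k` never is. Membership in `P₃(L)` is `(4,4,0) = (1,1,0) + 3·(1,1,0)`. -/

open MeasureTheory

/-- `P₃(L) = { l₀ + 3l₁ + 9l₂ + ⋯ : lᵢ ∈ L }` for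
`L = {(0,0,0), (1,1,0), (1,0,1), (0,1,1)}`. -/
def P19 : Set (Fin 3 → ℝ) :=
  {lam | ∃ (n : ℕ) (l : ℕ → (Fin 3 → ℝ)),
    (∀ i, l i ∈ ({![0,0,0], ![1,1,0], ![1,0,1], ![0,1,1]} : Set (Fin 3 → ℝ))) ∧
    lam = ∑ i ∈ Finset.range n, ((3 : ℝ) ^ i) • l i}

open Filter Topology Complex

section

variable {E ι : Type*} [TopologicalSpace E] [MeasurableSpace E] [OpensMeasurableSpace E]
  [Fintype ι]

lemma integral_eq_sum_of_forall_real {μ : Measure E} [IsFiniteMeasure μ] {T : ι → E → E}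
    (hT : ∀ j, Continuous (T j)) (w : ι → ℝ)
    (h : ∀ f : E → ℝ, Continuous f → ∫ x, f x ∂μ = ∑ j, w j * ∫ x, f (T j x) ∂μ)
    {g : E → ℂ} (hg : Continuous g) {C : ℝ} (hC : ∀ x, ‖g x‖ ≤ C) :
    ∫ x, g x ∂μ = ∑ j, w j * ∫ x, g (T j x) ∂μ := by
  have re_add_im : ∀ {u : E → E}, Continuous u →
      ((∫ x, (g (u x)).re ∂μ : ℝ) : ℂ) + (∫ x, (g (u x)).im ∂μ : ℝ) * I = ∫ x, g (u x) ∂μ :=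
    fun hu => integral_re_add_im <|
      .of_bound (hg.comp hu).aestronglyMeasurable C (ae_of_all _ fun x => hC _)
  calc ∫ x, g x ∂μ = ((∫ x, (g x).re ∂μ : ℝ) : ℂ) + (∫ x, (g x).im ∂μ : ℝ) * I :=
        (re_add_im continuous_id).symm
    _ = ∑ j, w j * (((∫ x, (g (T j x)).re ∂μ : ℝ) : ℂ) + (∫ x, (g (T j x)).im ∂μ : ℝ) * I) := by
        rw [h _ (by fun_prop), h _ (by fun_prop)]
        push_cast
        simp only [Finset.sum_mul, ← Finset.sum_add_distrib, mul_add, mul_assoc]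
    _ = ∑ j, w j * ∫ x, g (T j x) ∂μ := by simp only [re_add_im (hT _)]

end

open Real

section Fourier

variable {ι : Type*} [Fintype ι]

noncomputable def expDot (t x : ι → ℝ) : ℂ :=
  Complex.exp (((2 * π * ∑ i, t i * x i : ℝ) : ℂ) * I)

noncomputable def fourierMeasure (μ : Measure (ι → ℝ)) (t : ι → ℝ) : ℂ :=
  ∫ x, expDot t x ∂μ

lemma expDot_add_right (t x y : ι → ℝ) : expDot t (x + y) = expDot t x * expDot t y := by
  simp only [expDot, ← Complex.exp_add, Pi.add_apply, mul_add, Finset.sum_add_distrib]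
  congr 1
  push_cast
  ring

lemma expDot_smul_right (c : ℝ) (t x : ι → ℝ) : expDot t (c • x) = expDot (c • t) x := by
  simp only [expDot, Pi.smul_apply, smul_eq_mul, mul_assoc, mul_left_comm c]

lemma norm_expDot (t x : ι → ℝ) : ‖expDot t x‖ = 1 :=
  Complex.norm_exp_ofReal_mul_I _

@[fun_prop]
lemma continuous_expDot : Continuous fun p : (ι → ℝ) × (ι → ℝ) => expDot p.1 p.2 := by
  unfold expDot
  fun_prop

lemma fourierMeasure_zero (μ : Measure (ι → ℝ)) [IsProbabilityMeasure μ] :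
    fourierMeasure μ 0 = 1 := by
  simp [fourierMeasure, expDot]

lemma continuous_fourierMeasure (μ : Measure (ι → ℝ)) [IsFiniteMeasure μ] :
    Continuous (fourierMeasure μ) :=
  continuous_of_dominated (bound := fun _ => 1)
    (fun t => (continuous_expDot.comp (Continuous.prodMk_right t)).aestronglyMeasurable)
    (fun t => ae_of_all _ fun x => (norm_expDot t x).le) (integrable_const 1)
    (ae_of_all _ fun x => continuous_expDot.comp (Continuous.prodMk_left x))

lemma tendsto_fourierMeasure_pow_smul (μ : Measure (ι → ℝ)) [IsProbabilityMeasure μ]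
    {c : ℝ} (hc : |c| < 1) (t : ι → ℝ) :
    Tendsto (fun n : ℕ => fourierMeasure μ (c ^ n • t)) atTop (𝓝 1) := by
  have h : Tendsto (fun n : ℕ => c ^ n • t) atTop (𝓝 0) := by
    simpa using (tendsto_pow_atTop_nhds_zero_of_abs_lt_one hc).smul_const t
  rw [← fourierMeasure_zero μ]
  exact ((continuous_fourierMeasure μ).tendsto 0).comp h

end Fourier

lemma one_add_cexp_pi_mul_ne_zero {a : ℝ} (ha : ∀ n : ℤ, a ≠ 2 * n + 1) :
    1 + Complex.exp ((π * a : ℝ) * I) ≠ 0 := by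
  intro h
  have hcos : Real.cos (π * a) = -1 := by
    have := congrArg Complex.re h
    rw [Complex.add_re, Complex.exp_ofReal_mul_I_re, Complex.one_re, Complex.zero_re] at this
    linarith
  obtain ⟨n, hn⟩ := Real.cos_eq_neg_one_iff.1 hcos
  refine ha n (mul_left_cancel₀ pi_ne_zero ?_)
  linear_combination -hn

lemma intCast_div_ne_two_mul_add_one {p q : ℤ} (hp : Even p) (hq : Odd q) (n : ℤ) :
    (p : ℝ) / q ≠ 2 * n + 1 := by
  intro h
  have hq0 : (q : ℝ) ≠ 0 := by
    exact_mod_cast fun h0 : q = 0 => Int.not_even_iff_odd.2 hq (h0 ▸ Even.zero)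
  have hpq : p = (2 * n + 1) * q := by
    rw [div_eq_iff hq0] at h
    exact_mod_cast h
  exact Int.not_even_iff_odd.2 ((odd_two_mul_add_one n).mul hq) (hpq ▸ hp)

def IsScaleThreeEiffel (μ : Measure (Fin 3 → ℝ)) : Prop :=
  ∀ f : (Fin 3 → ℝ) → ℝ, Continuous f →
    ∫ x, f x ∂μ =
      (1 / 4) * ((∫ x, f ((3 : ℝ)⁻¹ • x) ∂μ)
        + (∫ x, f ((3 : ℝ)⁻¹ • x + ![1/2, 0, 0]) ∂μ)
        + (∫ x, f ((3 : ℝ)⁻¹ • x + ![0, 1/2, 0]) ∂μ)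
        + ∫ x, f ((3 : ℝ)⁻¹ • x + ![0, 0, 1/2]) ∂μ)

noncomputable def eiffelDigits : Fin 4 → Fin 3 → ℝ :=
  ![0, ![1/2, 0, 0], ![0, 1/2, 0], ![0, 0, 1/2]]

/-- The mask `χ_B` of the paper. -/
noncomputable def eiffelMask (t : Fin 3 → ℝ) : ℂ := (1 / 4) * ∑ j, expDot t (eiffelDigits j)

lemma eiffelMask_diag (a : ℝ) :
    eiffelMask ![a, a, 0] = (1 + Complex.exp ((π * a : ℝ) * I)) / 2 := by
  simp only [eiffelMask, one_div, expDot, eiffelDigits, Matrix.cons_val', Pi.zero_apply,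
    Matrix.cons_val_fin_one, Fin.sum_univ_three, Fin.isValue, Matrix.cons_val_zero,
    Matrix.cons_val_one, Matrix.cons_val, zero_mul, add_zero, ofReal_mul, ofReal_ofNat, ofReal_add,
    Fin.sum_univ_four, ofReal_zero, mul_zero, Complex.exp_zero, ofReal_inv, zero_add]
  ring_nf

lemma eiffelMask_inv_three_pow_smul_ne_zero (k : ℕ) :
    eiffelMask ((3 : ℝ)⁻¹ ^ k • ![4, 4, 0]) ≠ 0 := by
  have hvec : (3 : ℝ)⁻¹ ^ k • (![4, 4, 0] : Fin 3 → ℝ) =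
      ![((4 : ℤ) : ℝ) / ((3 ^ k : ℤ) : ℝ), ((4 : ℤ) : ℝ) / ((3 ^ k : ℤ) : ℝ), 0] := by
    ext i
    fin_cases i <;> simp [div_eq_inv_mul]
  rw [hvec, eiffelMask_diag]
  exact div_ne_zero (one_add_cexp_pi_mul_ne_zero
    (intCast_div_ne_two_mul_add_one (by decide) (Odd.pow (by decide)))) two_ne_zero

section Eiffel

variable {μ : Measure (Fin 3 → ℝ)} [IsFiniteMeasure μ]

lemma IsScaleThreeEiffel.fourierMeasure_eq_eiffelMask_mul (hμ : IsScaleThreeEiffel μ)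
    (t : Fin 3 → ℝ) :
    fourierMeasure μ t = eiffelMask t * fourierMeasure μ ((3 : ℝ)⁻¹ • t) := by
  have hμ' : ∀ f : (Fin 3 → ℝ) → ℝ, Continuous f → ∫ x, f x ∂μ =
      ∑ j, (1 / 4 : ℝ) * ∫ x, f ((3 : ℝ)⁻¹ • x + eiffelDigits j) ∂μ := by
    intro f hf
    rw [hμ f hf, Fin.sum_univ_four, ← mul_add, ← mul_add, ← mul_add]
    simp [eiffelDigits]
  rw [fourierMeasure, integral_eq_sum_of_forall_real (fun j => by fun_prop) _ hμ'
    (by fun_prop : Continuous (expDot t)) (fun x => (norm_expDot t x).le)]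
  simp only [expDot_add_right, expDot_smul_right, integral_mul_const, eiffelMask, fourierMeasure,
    Finset.mul_sum, Finset.sum_mul]
  push_cast
  exact Finset.sum_congr rfl fun _ _ => by ring

lemma IsScaleThreeEiffel.fourierMeasure_eq_prod_eiffelMask_mul (hμ : IsScaleThreeEiffel μ)
    (t : Fin 3 → ℝ) (n : ℕ) :
    fourierMeasure μ t =
      (∏ k ∈ Finset.range n, eiffelMask ((3 : ℝ)⁻¹ ^ k • t)) *
        fourierMeasure μ ((3 : ℝ)⁻¹ ^ n • t) := by
  induction n with
  | zero => simp
  | succ n ih =>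
    rw [ih, hμ.fourierMeasure_eq_eiffelMask_mul, smul_smul, ← pow_succ', Finset.prod_range_succ,
      mul_assoc]

end Eiffel

lemma zero_mem_P19 : (0 : Fin 3 → ℝ) ∈ P19 :=
  ⟨0, fun _ => ![0, 0, 0], fun _ => Set.mem_insert _ _, by simp⟩

lemma four_four_zero_mem_P19 : (![4, 4, 0] : Fin 3 → ℝ) ∈ P19 := by
  refine ⟨2, fun _ => ![1, 1, 0], fun _ => by simp, ?_⟩
  ext i
  fin_cases i <;> norm_num [Finset.sum_range_succ]

theorem scale_three_eiffel_not_orthogonal (μ : Measure (Fin 3 → ℝ))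
    [IsProbabilityMeasure μ]
    (hμ : ∀ f : (Fin 3 → ℝ) → ℝ, Continuous f →
      ∫ x, f x ∂μ =
        (1 / 4) * ((∫ x, f ((3 : ℝ)⁻¹ • x) ∂μ)
          + (∫ x, f ((3 : ℝ)⁻¹ • x + ![1/2, 0, 0]) ∂μ)
          + (∫ x, f ((3 : ℝ)⁻¹ • x + ![0, 1/2, 0]) ∂μ)
          + ∫ x, f ((3 : ℝ)⁻¹ • x + ![0, 0, 1/2]) ∂μ)) :
    (0 : Fin 3 → ℝ) ∈ P19 ∧ (![4, 4, 0] : Fin 3 → ℝ) ∈ P19 ∧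
    ∫ x, Complex.exp
        ((((2 : ℝ) * Real.pi * ∑ i, (![4, 4, 0] : Fin 3 → ℝ) i * x i : ℝ) : ℂ) * Complex.I) ∂μ
      ≠ 0 := by
  refine ⟨zero_mem_P19, four_four_zero_mem_P19, ?_⟩
  change fourierMeasure μ ![4, 4, 0] ≠ 0
  obtain ⟨n, hn⟩ := ((tendsto_fourierMeasure_pow_smul μ (by norm_num : |(3 : ℝ)⁻¹| < 1)
    ![4, 4, 0]).eventually_ne one_ne_zero).exists
  rw [IsScaleThreeEiffel.fourierMeasure_eq_prod_eiffelMask_mul hμ _ n]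
  exact mul_ne_zero (Finset.prod_ne_zero_iff.2 fun k _ =>
    eiffelMask_inv_three_pow_smul_ne_zero k) hn
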